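/- arXiv:math/0310357 — 3 statements merged into one kernel-verified Lean document; each statement's English description precedes it below -/
import Mathlib

section
/- If y ≥ 1 and 0 < w ≤ 1/50, then τ := y² / ((9y + 10√(yw))·√(yw)) satisfies 5/9 ≤ τ. -/
theorem step_length_lower_bound (y w : ℝ) (hy : 1 ≤ y) (hw0 : 0 < w) (hw : w ≤ 1 / 50) :
    5 / 9 ≤ y ^ 2 / ((9 * y + 10 * Real.sqrt (y * w)) * Real.sqrt (y * w)) := by
  set s := Real.sqrt (y * w) with hsdef
  have hy0 : 0 < y := lt_of_lt_of_le one_pos hy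
  have hs0 : 0 < s := Real.sqrt_pos.mpr (by positivity)
  have hs2 : s ^ 2 = y * w := Real.sq_sqrt (by positivity)
  have hD : 0 < (9 * y + 10 * s) * s := by positivity
  rw [le_div_iff₀ hD]
  have hyw : y * w ≤ y ^ 2 / 50 := by nlinarith
  nlinarith [sq_nonneg (y - 5 * s), sq_nonneg s, mul_pos hy0 hs0, sq_nonneg (s - 1), sq_nonneg (y - s)]
end

section
/- If y^0 = 1 and y^{k+1} ≤ y^k + √(y^k w^k) with y^k w^k ≤ (1/2)^k·(1/50), then y^k ≤ 1 + (√2/10)·(1-(1/√2)^k)/(1-1/√2) ≤ 1 + 2/(10(√2-1)) < 3/2 for all k. -/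
theorem state_iterates_upper_bound (y w : ℕ → ℝ)
    (hy0 : y 0 = 1)
    (hyup : ∀ k : ℕ, y (k + 1) ≤ y k + Real.sqrt (y k * w k))
    (hyw : ∀ k : ℕ, y k * w k ≤ (1 / 2) ^ k * (1 / 50)) :
    ∀ k : ℕ,
      y k ≤ 1 + (Real.sqrt 2 / 10) * (1 - (1 / Real.sqrt 2) ^ k) / (1 - 1 / Real.sqrt 2) ∧
      1 + (Real.sqrt 2 / 10) * (1 - (1 / Real.sqrt 2) ^ k) / (1 - 1 / Real.sqrt 2) ≤
        1 + 2 / (10 * (Real.sqrt 2 - 1)) ∧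
      (1 : ℝ) + 2 / (10 * (Real.sqrt 2 - 1)) < 3 / 2 := by
  have hs2 : Real.sqrt 2 ^ 2 = 2 := Real.sq_sqrt (by norm_num)
  have hsnn : (0:ℝ) ≤ Real.sqrt 2 := Real.sqrt_nonneg 2
  have hs14 : (1.4:ℝ) < Real.sqrt 2 := by nlinarith
  set s := Real.sqrt 2 with hs
  have hs15 : s < 1.5 := by nlinarith
  have hs0 : (0:ℝ) < s := by linarith
  have hsne : s ≠ 0 := ne_of_gt hs0
  have hinv : 1 / s = s / 2 := by
    field_simp; nlinarith
  have hden : (0:ℝ) < 1 - s/2 := by linarith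
  have hdne : 1 - s/2 ≠ 0 := ne_of_gt hden
  have hhalf : (s/2)^2 = (1/2:ℝ) := by rw [div_pow, hs2]; norm_num
  have hsq : ∀ k : ℕ, ((s/2)^k)^2 = (1/2:ℝ)^k := by
    intro k; rw [← pow_mul, mul_comm, pow_mul, hhalf]
  have h50 : (s/10)^2 = (1/50:ℝ) := by rw [div_pow, hs2]; norm_num
  have hsqrt : ∀ k : ℕ, Real.sqrt ((1/2)^k * (1/50)) = (s/2)^k * (s/10) := by
    intro k
    rw [show (1/2:ℝ)^k * (1/50) = ((s/2)^k * (s/10))^2 by rw [mul_pow, hsq, h50]]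
    exact Real.sqrt_sq (by positivity)
  have h10 : (0:ℝ) < 10 * (s - 1) := by nlinarith
  have h3 : (1:ℝ) + 2 / (10 * (s - 1)) < 3 / 2 := by
    have : 2 / (10 * (s - 1)) < 1/2 := by
      rw [div_lt_div_iff₀ h10 (by norm_num)]; nlinarith
    linarith
  have key : ∀ t : ℝ, 1 + (s/10) * (1 - t) / (1 - s/2) + t * (s/10)
      = 1 + (s/10) * (1 - (s/2) * t) / (1 - s/2) := by
    intro t
    apply mul_right_cancel₀ hdne
    rw [add_mul, add_mul, add_mul, div_mul_cancel₀ _ hdne, div_mul_cancel₀ _ hdne]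
    ring
  have h1 : ∀ k : ℕ, y k ≤ 1 + (s / 10) * (1 - (s/2)^k) / (1 - s/2) := by
    intro k
    induction k with
    | zero => simp [hy0]
    | succ k ih =>
      have hb : Real.sqrt (y k * w k) ≤ (s/2)^k * (s/10) := by
        rw [← hsqrt k]; exact Real.sqrt_le_sqrt (hyw k)
      have hk := key ((s/2)^k)
      rw [← pow_succ'] at hk
      have := hyup k
      linarith
  intro k
  simp only [hinv]
  refine ⟨h1 k, ?_, h3⟩
  have ht : (0:ℝ) ≤ (s/2)^k := by positivity
  rw [add_le_add_iff_left, div_le_div_iff₀ hden h10]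
  nlinarith [mul_nonneg ht (by nlinarith : (0:ℝ) ≤ 2 - s)]
end

section
/- Let (x^k, y^k, w^k) be a sequence with x^k ∈ [-1/2, 0], y^k ∈ [1, 3/2], w^k ∈ [0, 1/50], w^{k+1} ≤ w^k/2, and x^k + y^k = 1 for all k. Then every limit point (x^∞, y^∞, w^∞) satisfies w^∞ = 0, y^∞ ≥ 1, x^∞ ≥ -1/2, x^∞ + y^∞ = 1, and y^∞ + w^∞ ≥ 1 > 0 (strict complementarity), yet x^∞ > -1, so the limit point differs from the unique minimizer (-1, 2, 0). -/
theorem limit_point_properties (x y w : ℕ → ℝ)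
    (hx : ∀ k : ℕ, x k ∈ Set.Icc (-1 / 2 : ℝ) 0)
    (hy : ∀ k : ℕ, y k ∈ Set.Icc (1 : ℝ) (3 / 2))
    (hw : ∀ k : ℕ, w k ∈ Set.Icc (0 : ℝ) (1 / 50))
    (hwhalf : ∀ k : ℕ, w (k + 1) ≤ w k / 2)
    (hlin : ∀ k : ℕ, x k + y k = 1) :
    ∀ x' y' w' : ℝ, (∃ φ : ℕ → ℕ, StrictMono φ ∧
        Filter.Tendsto (x ∘ φ) Filter.atTop (nhds x') ∧
        Filter.Tendsto (y ∘ φ) Filter.atTop (nhds y') ∧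
        Filter.Tendsto (w ∘ φ) Filter.atTop (nhds w')) →
      w' = 0 ∧ 1 ≤ y' ∧ -1 / 2 ≤ x' ∧ x' + y' = 1 ∧
      1 ≤ y' + w' ∧ (0 : ℝ) < 1 ∧ -1 < x' ∧ (x', y', w') ≠ (-1, 2, 0) := by
  intro x' y' w' ⟨φ, hφ, hxlim, hylim, hwlim⟩
  -- w k ≤ w 0 * (1/2)^k
  have hbound : ∀ k, w k ≤ w 0 * (1 / 2) ^ k := by
    intro k
    induction k with
    | zero => simp
    | succ n ih =>
      calc w (n + 1) ≤ w n / 2 := hwhalf n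
        _ ≤ (w 0 * (1 / 2) ^ n) / 2 := by linarith
        _ = w 0 * (1 / 2) ^ (n + 1) := by ring
  have hw0 : Filter.Tendsto w Filter.atTop (nhds 0) := by
    have h1 : Filter.Tendsto (fun k => w 0 * (1 / 2 : ℝ) ^ k) Filter.atTop (nhds 0) := by
      have := tendsto_pow_atTop_nhds_zero_of_lt_one (by norm_num : (0:ℝ) ≤ 1/2)
        (by norm_num : (1/2:ℝ) < 1)
      simpa using this.const_mul (w 0)
    exact squeeze_zero (fun k => (hw k).1) hbound h1
  have hw0' : Filter.Tendsto (w ∘ φ) Filter.atTop (nhds 0) :=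
    hw0.comp hφ.tendsto_atTop
  have hw'eq : w' = 0 := tendsto_nhds_unique hwlim hw0'
  have hy' : 1 ≤ y' := le_of_tendsto_of_tendsto' tendsto_const_nhds hylim
    (fun k => (hy (φ k)).1)
  have hx' : -1 / 2 ≤ x' := le_of_tendsto_of_tendsto' tendsto_const_nhds hxlim
    (fun k => (hx (φ k)).1)
  have hsum : x' + y' = 1 := by
    have : Filter.Tendsto (fun k => (x ∘ φ) k + (y ∘ φ) k) Filter.atTop (nhds (x' + y')) :=
      hxlim.add hylim
    have h2 : Filter.Tendsto (fun k => (x ∘ φ) k + (y ∘ φ) k) Filter.atTop (nhds 1) := by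
      simp [Function.comp, hlin]
    exact tendsto_nhds_unique this h2
  refine ⟨hw'eq, hy', hx', hsum, by linarith, by norm_num, by linarith, ?_⟩
  intro h
  rw [Prod.ext_iff] at h
  have : x' = -1 := h.1
  linarith
end
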